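/- SFLL trade-off identity: for SFLL-flex^{c×k}, the wrong-key error rate is ε = c·2^{−k} and the probability that SAT succeeds within q iterations is p(q) = q·2^{⌈log₂ c⌉ − k}. If c is a power of 2, then p(q) = q·ε, i.e., the SAT success probability within q queries is exactly q times the error rate; in general q·ε ≤ p(q) < 2qε. -/
import Mathlib

/-- SFLL trade-off identity: with error rate `ε = c/2^k` and SAT success
probability `p q = q·2^⌈log₂ c⌉/2^k`, if `c` is a power of 2 then `p q = q·ε`,
and in general `q·ε ≤ p q < 2·q·ε`. -/
theorem sfll_tradeoff (c k q j : ℕ) (hc : 0 < c) (hk : 0 < k) (hq : 0 < q)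
    (hck : c ≤ 2 ^ k) (hj : c ≤ 2 ^ j) (hjmin : ∀ j', c ≤ 2 ^ j' → j ≤ j') :
    ((∃ i : ℕ, c = 2 ^ i) →
        (q : ℚ) * (2 : ℚ) ^ j / (2 : ℚ) ^ k = (q : ℚ) * ((c : ℚ) / (2 : ℚ) ^ k)) ∧
      (q : ℚ) * ((c : ℚ) / (2 : ℚ) ^ k) ≤ (q : ℚ) * (2 : ℚ) ^ j / (2 : ℚ) ^ k ∧
      (q : ℚ) * (2 : ℚ) ^ j / (2 : ℚ) ^ k < 2 * ((q : ℚ) * ((c : ℚ) / (2 : ℚ) ^ k)) := by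
  have h2j : (2 : ℕ) ^ j < 2 * c := by
    cases j with
    | zero => simp; omega
    | succ n =>
      have hn : ¬ c ≤ 2 ^ n := fun h => by have := hjmin n h; omega
      have : 2 ^ n < c := by omega
      calc 2 ^ (n + 1) = 2 * 2 ^ n := by ring
        _ < 2 * c := by omega
  have hcq : (c : ℚ) ≤ (2 : ℚ) ^ j := by exact_mod_cast hj
  have h2jq : ((2 : ℚ) ^ j) < 2 * c := by exact_mod_cast h2j
  have hkpos : (0 : ℚ) < (2 : ℚ) ^ k := by positivity
  have hqpos : (0 : ℚ) < (q : ℚ) := by exact_mod_cast hq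
  refine ⟨?_, ?_, ?_⟩
  · rintro ⟨i, rfl⟩
    have : j = i := le_antisymm (hjmin i le_rfl)
      (by by_contra h
          push_neg at h
          exact absurd (pow_lt_pow_right₀ one_lt_two h) (not_lt.2 hj))
    subst this
    push_cast
    ring
  · rw [mul_div_assoc]
    gcongr
  · rw [div_lt_iff₀ hkpos]
    have : (q : ℚ) * (2:ℚ)^j < 2 * (q * c) := by nlinarith
    calc (q : ℚ) * (2:ℚ)^j < 2 * (q * c) := this
      _ = 2 * (q * (c / 2^k)) * 2^k := by field_simp
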